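/- Let 0 → I₁ → A₁ → B₁ → 0 and 0 → I₂ → A₂ → B₂ → 0 be short exact sequences of (not necessarily unital) C*-algebras: ι₁ : I₁ → A₁ and ι₂ : I₂ → A₂ are injective *-homomorphisms, q₁ : A₁ → B₁ and q₂ : A₂ → B₂ are surjective *-homomorphisms, and the range of ιᵢ equals the kernel of qᵢ (i = 1, 2). Let φ₁ : I₂ → I₁, φ₂ : A₂ → A₁ and φ₃ : B₂ → B₁ be injective *-homomorphisms making the diagram commute, i.e. ι₁ ∘ φ₁ = φ₂ ∘ ι₂ and q₁ ∘ φ₂ = φ₃ ∘ q₂. If φ₁ and φ₃ are full, then φ₂ is full. -/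
import Mathlib


/-- A *-homomorphism `φ : A → B` between C*-algebras is *full* if the closed two-sided
ideal of `B` generated by the range of `φ` is all of `B`. -/
def IsFullStarHom {A B : Type*}
    [NonUnitalNormedRing A] [StarRing A] [NormedSpace ℂ A]
    [NonUnitalNormedRing B] [StarRing B] [NormedSpace ℂ B]
    (φ : A →⋆ₙₐ[ℂ] B) : Prop :=
  closure ((TwoSidedIdeal.span (Set.range φ) : TwoSidedIdeal B) : Set B) = Set.univ

/-- Given a commutative diagram of short exact sequences of C*-algebras with injective
vertical maps `φ₁ : I₂ → I₁`, `φ₂ : A₂ → A₁`, `φ₃ : B₂ → B₁`, if `φ₁` and `φ₃` are full,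
then so is `φ₂`. -/
theorem full_of_full_full
    {I₁ A₁ B₁ I₂ A₂ B₂ : Type*}
    [NonUnitalNormedRing I₁] [StarRing I₁] [CStarRing I₁] [CompleteSpace I₁]
    [NormedSpace ℂ I₁] [IsScalarTower ℂ I₁ I₁] [SMulCommClass ℂ I₁ I₁] [StarModule ℂ I₁]
    [NonUnitalNormedRing A₁] [StarRing A₁] [CStarRing A₁] [CompleteSpace A₁]
    [NormedSpace ℂ A₁] [IsScalarTower ℂ A₁ A₁] [SMulCommClass ℂ A₁ A₁] [StarModule ℂ A₁]
    [NonUnitalNormedRing B₁] [StarRing B₁] [CStarRing B₁] [CompleteSpace B₁]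
    [NormedSpace ℂ B₁] [IsScalarTower ℂ B₁ B₁] [SMulCommClass ℂ B₁ B₁] [StarModule ℂ B₁]
    [NonUnitalNormedRing I₂] [StarRing I₂] [CStarRing I₂] [CompleteSpace I₂]
    [NormedSpace ℂ I₂] [IsScalarTower ℂ I₂ I₂] [SMulCommClass ℂ I₂ I₂] [StarModule ℂ I₂]
    [NonUnitalNormedRing A₂] [StarRing A₂] [CStarRing A₂] [CompleteSpace A₂]
    [NormedSpace ℂ A₂] [IsScalarTower ℂ A₂ A₂] [SMulCommClass ℂ A₂ A₂] [StarModule ℂ A₂]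
    [NonUnitalNormedRing B₂] [StarRing B₂] [CStarRing B₂] [CompleteSpace B₂]
    [NormedSpace ℂ B₂] [IsScalarTower ℂ B₂ B₂] [SMulCommClass ℂ B₂ B₂] [StarModule ℂ B₂]
    (ι₁ : I₁ →⋆ₙₐ[ℂ] A₁) (q₁ : A₁ →⋆ₙₐ[ℂ] B₁)
    (ι₂ : I₂ →⋆ₙₐ[ℂ] A₂) (q₂ : A₂ →⋆ₙₐ[ℂ] B₂)
    (φ₁ : I₂ →⋆ₙₐ[ℂ] I₁) (φ₂ : A₂ →⋆ₙₐ[ℂ] A₁) (φ₃ : B₂ →⋆ₙₐ[ℂ] B₁)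
    (hι₁ : Function.Injective ι₁) (hq₁ : Function.Surjective q₁)
    (hexact₁ : Set.range ι₁ = {a : A₁ | q₁ a = 0})
    (hι₂ : Function.Injective ι₂) (hq₂ : Function.Surjective q₂)
    (hexact₂ : Set.range ι₂ = {a : A₂ | q₂ a = 0})
    (hφ₁ : Function.Injective φ₁) (hφ₂ : Function.Injective φ₂)
    (hφ₃ : Function.Injective φ₃)
    (hcommι : ∀ x : I₂, ι₁ (φ₁ x) = φ₂ (ι₂ x))
    (hcommq : ∀ a : A₂, q₁ (φ₂ a) = φ₃ (q₂ a))
    (hfull₁ : IsFullStarHom φ₁) (hfull₃ : IsFullStarHom φ₃) :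
    IsFullStarHom φ₂ := by

  classical
  letI : NonUnitalCStarAlgebra I₁ := {}
  letI : NonUnitalCStarAlgebra A₁ := {}
  letI : NonUnitalCStarAlgebra B₁ := {}
  letI : NonUnitalCStarAlgebra I₂ := {}
  letI : NonUnitalCStarAlgebra A₂ := {}
  letI : NonUnitalCStarAlgebra B₂ := {}
  -- continuity of the maps
  have hq₁cont : Continuous q₁ := AddMonoidHomClass.continuous_of_bound q₁ 1
    (fun a => by simpa using NonUnitalStarAlgHom.norm_apply_le q₁ a)
  have hι₁cont : Continuous ι₁ := AddMonoidHomClass.continuous_of_bound ι₁ 1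
    (fun a => by simpa using NonUnitalStarAlgHom.norm_apply_le ι₁ a)
  set S : TwoSidedIdeal A₁ := TwoSidedIdeal.span (Set.range φ₂) with hS
  set J : Set A₁ := closure (S : Set A₁) with hJ
  have hSJ : (S : Set A₁) ⊆ J := subset_closure
  -- J is closed under addition (and contains 0)
  have hJadd : ∀ {x y : A₁}, x ∈ J → y ∈ J → x + y ∈ J := by
    intro x y hx hy
    let G : AddSubgroup A₁ :=
      { carrier := (S : Set A₁)
        zero_mem' := S.zero_mem
        add_mem' := fun ha hb => S.add_mem ha hb
        neg_mem' := fun ha => S.neg_mem ha }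
    exact G.topologicalClosure.add_mem (by exact hx) (by exact hy)
  -- the kernel of q₁ is contained in J
  have hkerJ : {a : A₁ | q₁ a = 0} ⊆ J := by
    rw [← hexact₁]
    rintro _ ⟨y, rfl⟩
    have hsub : ((TwoSidedIdeal.span (Set.range φ₁) : TwoSidedIdeal I₁) : Set I₁) ⊆ ι₁ ⁻¹' (S : Set A₁) := by
      intro z hz
      have hle : (TwoSidedIdeal.span (Set.range φ₁) : TwoSidedIdeal I₁) ≤
          TwoSidedIdeal.comap ι₁ S := by
        intro w hw
        refine TwoSidedIdeal.mem_span_iff.mp hw _ ?_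
        rintro _ ⟨v, rfl⟩
        rw [SetLike.mem_coe, TwoSidedIdeal.mem_comap, hcommι v]
        exact TwoSidedIdeal.subset_span ⟨ι₂ v, rfl⟩
      have := hle hz
      rwa [TwoSidedIdeal.mem_comap] at this
    have hy : y ∈ closure ((TwoSidedIdeal.span (Set.range φ₁) : TwoSidedIdeal I₁) : Set I₁) := by
      rw [hfull₁]; trivial
    have : ι₁ y ∈ ι₁ '' closure ((TwoSidedIdeal.span (Set.range φ₁) : TwoSidedIdeal I₁) : Set I₁) :=
      ⟨y, hy, rfl⟩
    refine closure_mono ?_ (image_closure_subset_closure_image hι₁cont this)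
    intro w ⟨z, hz, hzw⟩
    exact hzw ▸ hsub hz
  -- J is saturated with respect to q₁
  have hsat : ∀ {a j : A₁}, j ∈ J → q₁ a = q₁ j → a ∈ J := by
    intro a j hj hq
    have h1 : a - j ∈ J := by
      apply hkerJ
      simp only [Set.mem_setOf_eq, map_sub, hq, sub_self]
    have := hJadd h1 hj
    simpa using this
  -- q₁ '' J is dense
  have hdense : closure (q₁ '' J) = Set.univ := by
    have h1 : ((TwoSidedIdeal.span (Set.range φ₃) : TwoSidedIdeal B₁) : Set B₁) ⊆ q₁ '' J := by
      -- the image of S under the surjective hom q₁ is a two-sided ideal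
      let T : TwoSidedIdeal B₁ := TwoSidedIdeal.mk' (q₁ '' (S : Set A₁))
        ⟨0, S.zero_mem, map_zero q₁⟩
        (by rintro _ _ ⟨x, hx, rfl⟩ ⟨y, hy, rfl⟩; exact ⟨x + y, S.add_mem hx hy, map_add q₁ x y⟩)
        (by rintro _ ⟨x, hx, rfl⟩; exact ⟨-x, S.neg_mem hx, map_neg q₁ x⟩)
        (by
          rintro b _ ⟨y, hy, rfl⟩
          obtain ⟨x, rfl⟩ := hq₁ b
          exact ⟨x * y, S.mul_mem_left x y hy, map_mul q₁ x y⟩)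
        (by
          rintro _ b ⟨x, hx, rfl⟩
          obtain ⟨y, rfl⟩ := hq₁ b
          exact ⟨x * y, S.mul_mem_right x y hx, map_mul q₁ x y⟩)
      have hT : (T : Set B₁) = q₁ '' (S : Set A₁) := by
        ext x; exact TwoSidedIdeal.mem_mk' _ _ _ _ _ _ x
      intro b hb
      have hle : (TwoSidedIdeal.span (Set.range φ₃) : TwoSidedIdeal B₁) ≤ T := by
        intro w hw
        refine TwoSidedIdeal.mem_span_iff.mp hw _ ?_
        rintro _ ⟨v, rfl⟩
        obtain ⟨a₂, rfl⟩ := hq₂ v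
        rw [SetLike.mem_coe, ← SetLike.mem_coe, hT, ← hcommq a₂]
        exact ⟨φ₂ a₂, TwoSidedIdeal.subset_span ⟨a₂, rfl⟩, rfl⟩
      have := hle hb
      rw [← SetLike.mem_coe, hT] at this
      exact Set.image_mono hSJ this
    have := closure_mono h1
    rw [hfull₃] at this
    exact Set.eq_univ_of_univ_subset this
  -- q₁ is an open map
  have hopen : IsOpenMap q₁ := by
    let q : A₁ →L[ℂ] B₁ :=
      { toLinearMap :=
          { toFun := q₁
            map_add' := map_add q₁
            map_smul' := map_smul q₁ }
        cont := hq₁cont }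
    exact ContinuousLinearMap.isOpenMap q hq₁
  -- q₁ '' J is closed
  have hclosed : IsClosed (q₁ '' J) := by
    rw [← isOpen_compl_iff]
    have hcompl : (q₁ '' J)ᶜ = q₁ '' Jᶜ := by
      ext b
      constructor
      · intro hb
        obtain ⟨a, rfl⟩ := hq₁ b
        exact ⟨a, fun ha => hb ⟨a, ha, rfl⟩, rfl⟩
      · rintro ⟨a, ha, rfl⟩ ⟨j, hj, hqj⟩
        exact ha (hsat hj hqj.symm)
    rw [hcompl]
    exact hopen _ (isClosed_closure.isOpen_compl)
  have himg : q₁ '' J = Set.univ := by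
    rw [← hclosed.closure_eq]; exact hdense
  -- conclude
  rw [IsFullStarHom, ← hS, ← hJ]
  apply Set.eq_univ_of_forall
  intro a
  have : q₁ a ∈ q₁ '' J := himg ▸ Set.mem_univ _
  obtain ⟨j, hj, hqj⟩ := this
  exact hsat hj hqj.symm
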